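/- Fix an integer e>1 and a charge (s_0,s_1)∈ℕ² with s_0 ≤ s_1. If λ=(λ^(0),λ^(1)) ∈ Φ_{e,n}^{(s_0,s_1)}, then for all i = 1, 2, 3, … one has λ^(0)_i ≥ λ^(1)_{i+s_1−s_0} (parts beyond the length of a partition are 0). -/

import Mathlib

open Finset

/-- A node `(a, b, c)`: row index `a ≥ 1`, column index `b ≥ 1`, component `c ∈ {0,1}`. -/
abbrev Node : Type := ℕ × ℕ × Fin 2

namespace UglovPaper

/-- Row index of a node. -/
def nrow (γ : Node) : ℕ := γ.1

/-- Column index of a node. -/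
def ncol (γ : Node) : ℕ := γ.2.1

/-- Component of a node. -/
def ncomp (γ : Node) : Fin 2 := γ.2.2

/-- A finite set of nodes is the Young diagram of a bipartition iff all indices are `≥ 1`
and the set is closed under moving left in a row and up in a column (in each component). -/
def IsDiagram (D : Finset Node) : Prop :=
  (∀ γ ∈ D, 1 ≤ nrow γ ∧ 1 ≤ ncol γ) ∧
  (∀ γ ∈ D, ∀ b' : ℕ, 1 ≤ b' → b' ≤ ncol γ → (nrow γ, b', ncomp γ) ∈ D) ∧
  (∀ γ ∈ D, 2 ≤ nrow γ → (nrow γ - 1, ncol γ, ncomp γ) ∈ D)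

/-- `part D c a` is the `a`-th part `λ^(c)_a` of the bipartition with diagram `D`. -/
def part (D : Finset Node) (c : Fin 2) (a : ℕ) : ℕ :=
  (D.filter (fun γ => nrow γ = a ∧ ncomp γ = c)).card

/-- The content `b - a + s_c` of a node `(a,b,c)` for the charge `s`. -/
def cont (s : Fin 2 → ℤ) (γ : Node) : ℤ := (ncol γ : ℤ) - (nrow γ : ℤ) + s (ncomp γ)

/-- The residue mod `e` of a node for the charge `s`. -/
def res (e : ℕ) (s : Fin 2 → ℤ) (γ : Node) : ZMod e := ((cont s γ : ℤ) : ZMod e)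

/-- The order `γ <_{(s₀,s₁)} γ'` on nodes. -/
def chargeLT (s : Fin 2 → ℤ) (γ γ' : Node) : Prop :=
  cont s γ < cont s γ' ∨ (cont s γ = cont s γ' ∧ ncomp γ' < ncomp γ)

/-- The positive asymptotic order `γ <_{(v₀,v₁)₊} γ'`. -/
def posLT (γ γ' : Node) : Prop :=
  ncomp γ' < ncomp γ ∨ (ncomp γ = ncomp γ' ∧ nrow γ' < nrow γ)

/-- The negative asymptotic order `γ <_{(v₀,v₁)₋} γ'`. -/
def negLT (γ γ' : Node) : Prop :=
  ncomp γ < ncomp γ' ∨ (ncomp γ = ncomp γ' ∧ nrow γ' < nrow γ)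

/-- `γ` is a removable node of the diagram `D`. -/
def Removable (D : Finset Node) (γ : Node) : Prop := γ ∈ D ∧ IsDiagram (D.erase γ)

/-- `γ` is an addable node of the diagram `D`. -/
def Addable (D : Finset Node) (γ : Node) : Prop := γ ∉ D ∧ IsDiagram (insert γ D)

/-- `γ` is a normal `i`-node of `D` with respect to the order `lt` and the residue map `r`:
it is a removable `i`-node, and for every `i`-node `η` above it, the number of addable
`i`-nodes in the interval `(γ, η]` does not exceed the number of removable `i`-nodes there.
This is equivalent to surviving the `RA`-deletion process. -/
def NormalNode {α : Type*} (D : Finset Node) (lt : Node → Node → Prop)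
    (r : Node → α) (i : α) (γ : Node) : Prop :=
  Removable D γ ∧ r γ = i ∧
  ∀ η : Node, r η = i → lt γ η →
    {x : Node | Addable D x ∧ r x = i ∧ lt γ x ∧ (lt x η ∨ x = η)}.ncard ≤
    {x : Node | Removable D x ∧ r x = i ∧ lt γ x ∧ (lt x η ∨ x = η)}.ncard

/-- `γ` is the good `i`-node of `D`: the minimal normal `i`-node for the order `lt`. -/
def GoodNode {α : Type*} (D : Finset Node) (lt : Node → Node → Prop)
    (r : Node → α) (i : α) (γ : Node) : Prop :=
  NormalNode D lt r i γ ∧ ∀ δ : Node, NormalNode D lt r i δ → δ = γ ∨ lt γ δ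

/-- The recursively defined class of bipartitions labelling the crystal:
the empty bipartition has rank `0`, and a bipartition of rank `n + 1` belongs iff
removing some good `i`-node yields a member of rank `n`. -/
inductive CrystalSet {α : Type*} (lt : Node → Node → Prop) (r : Node → α) :
    ℕ → Finset Node → Prop
  | empty : CrystalSet lt r 0 ∅
  | step {n : ℕ} {D : Finset Node} {γ : Node} (i : α) :
      IsDiagram D → GoodNode D lt r i γ →
      CrystalSet lt r n (D.erase γ) → CrystalSet lt r (n + 1) D

/-- The set `Φ_{e,n}^{(s₀,s₁)}` of Uglov bipartitions. -/
def UglovSet (e : ℕ) (s : Fin 2 → ℤ) : ℕ → Finset Node → Prop :=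
  CrystalSet (chargeLT s) (res e s)

/-- The set `Φ_{e,n}^{(v₀,v₁)₊}` of positive Kleshchev bipartitions. -/
def KleshchevPos (e : ℕ) (v : Fin 2 → ℤ) : ℕ → Finset Node → Prop :=
  CrystalSet posLT (res e v)

/-- The set `Φ_{e,n}^{(v₀,v₁)₋}` of negative Kleshchev bipartitions. -/
def KleshchevNeg (e : ℕ) (v : Fin 2 → ℤ) : ℕ → Finset Node → Prop :=
  CrystalSet negLT (res e v)

/-- Swapping the two components of a bipartition: `(λ⁽⁰⁾,λ⁽¹⁾) ↦ (λ⁽¹⁾,λ⁽⁰⁾)`. -/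
def swapDiagram (D : Finset Node) : Finset Node :=
  D.image (fun γ => (γ.1, γ.2.1, γ.2.2 + 1))

/-! ### Symbols -/

/-- `beta s m D c j` is the `j`-th entry `β^(c)_j = λ^(c)_j − j + s_c + m` of the
`s`-symbol of `D`, for `1 ≤ j ≤ m + s_c`. -/
def beta (s : Fin 2 → ℕ) (m : ℕ) (D : Finset Node) (c : Fin 2) (j : ℕ) : ℕ :=
  part D c j + (m + s c) - j

/-- The multiset of entries of the row `β^(c)` of the `s`-symbol. -/
def rowM (s : Fin 2 → ℕ) (m : ℕ) (D : Finset Node) (c : Fin 2) : Multiset ℕ :=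
  (Finset.Icc 1 (m + s c)).val.map (beta s m D c)

/-- The list of the values `θ(β⁽⁰⁾_{m+s₀}), θ(β⁽⁰⁾_{m+s₀-1}), …` chosen greedily:
at step `k` (handling `p = m + s₀ - k`) we choose the largest entry of the top row not yet
used that is `≤ β⁽⁰⁾_p`. -/
def thetaList (s : Fin 2 → ℕ) (m : ℕ) (D : Finset Node) : ℕ → List ℕ
  | 0 => []
  | k + 1 =>
      let prev := thetaList s m D k
      prev ++ [((((Finset.Icc 1 (m + s 1)).image (beta s m D 1)).filter
          (fun y => y ∉ prev ∧ y ≤ beta s m D 0 (m + s 0 - k))).max.unbotD 0)]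

/-- The greedy injection `θ`, as a function of the index `p ∈ {1, …, m + s₀}`:
`theta s m D p = θ(β⁽⁰⁾_p)`. -/
def theta (s : Fin 2 → ℕ) (m : ℕ) (D : Finset Node) (p : ℕ) : ℕ :=
  (thetaList s m D (m + s 0)).getD (m + s 0 - p) 0

/-- The bottom row of the symbol obtained by exchanging the entries of every pair:
it is the multiset of the values `θ(β⁽⁰⁾_p)`. -/
def bottomRowNew (s : Fin 2 → ℕ) (m : ℕ) (D : Finset Node) : Multiset ℕ :=
  (Finset.Icc 1 (m + s 0)).val.map (theta s m D)

/-- The top row of the symbol obtained by exchanging the entries of every pair: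
all entries of both rows that did not go to the new bottom row. -/
def topRowNew (s : Fin 2 → ℕ) (m : ℕ) (D : Finset Node) : Multiset ℕ :=
  (rowM s m D 0 + rowM s m D 1) - bottomRowNew s m D

/-- The rows of the symbol of `Υ(λ)`. -/
def newRow (s : Fin 2 → ℕ) (m : ℕ) (D : Finset Node) (c : Fin 2) : Multiset ℕ :=
  if c = 0 then bottomRowNew s m D else topRowNew s m D

/-- The `j`-th largest entry of a multiset of naturals (`j ≥ 1`). -/
def rowEntry (B : Multiset ℕ) (j : ℕ) : ℕ :=
  (B.sort (· ≤ ·)).getD (Multiset.card B - j) 0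

/-- The `j`-th part of the partition encoded by a multiset of `card B` distinct
beta-numbers: `λ_j = (j-th largest entry) + j - card B`. -/
def rowPart (B : Multiset ℕ) (j : ℕ) : ℕ :=
  if 1 ≤ j ∧ j ≤ Multiset.card B then rowEntry B j + j - Multiset.card B else 0

/-- The Young diagram of the bipartition with parts `p`, within the box of size `N`. -/
def toDiagram (p : Fin 2 → ℕ → ℕ) (N : ℕ) : Finset Node :=
  ((Finset.Icc 1 N) ×ˢ (Finset.Icc 1 N) ×ˢ (Finset.univ : Finset (Fin 2))).filter
    (fun γ => γ.2.1 ≤ p γ.2.2 γ.1)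

/-- The map `Υ_{(s₀,s₁)}`: exchange the two entries of every pair of the `s`-symbol and
reorder the rows; `Upsilon s m D` is the diagram of the resulting bipartition. -/
def Upsilon (s : Fin 2 → ℕ) (m : ℕ) (D : Finset Node) : Finset Node :=
  toDiagram (fun c j => rowPart (newRow s m D c) j) D.card

/-- The list of values `τ(α⁽⁰⁾_1), τ(α⁽⁰⁾_2), …` chosen greedily: at step `k + 1`
(handling `p = k + 1`) we choose the smallest entry of the top row `Top` not yet used
that is `≥ b (k+1)`, where `b p` is the `p`-th entry of the bottom row. -/
def tauList (Top : Finset ℕ) (b : ℕ → ℕ) : ℕ → List ℕ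
  | 0 => []
  | k + 1 =>
      let prev := tauList Top b k
      prev ++ [((Top.filter (fun y => y ∉ prev ∧ b (k + 1) ≤ y)).min.untopD 0)]

/-- The greedy injection `τ`, as a function of the index `p ∈ {1, …, P}`. -/
def tau (Top : Finset ℕ) (b : ℕ → ℕ) (P : ℕ) (p : ℕ) : ℕ :=
  (tauList Top b P).getD (p - 1) 0

end UglovPaper
namespace UglovPaper

/-!
Induct along the recursive definition of `Φ_{e,n}^{(s₀,s₁)}`, with `d = s₁ - s₀`. Adding a
good node `γ` to a bipartition satisfying `λ⁽¹⁾_{j+d} ≤ λ⁽⁰⁾_j` can only break the inequality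
when `λ⁽¹⁾_{j+d} = λ⁽⁰⁾_j` before and `γ = (j+d, λ⁽⁰⁾_j+1, 1)`. But then the node
`(j, λ⁽⁰⁾_j+1, 0)` is addable and has the same content as `γ`, so it is the immediate successor
of `γ` for `<_{(s₀,s₁)}`: the word of `res(γ)`-nodes contains the factor `RA` at `γ`, and `γ`
is not normal.
-/

def ShiftDominated (d : ℕ) (D : Finset Node) : Prop :=
  ∀ i, 1 ≤ i → part D 1 (i + d) ≤ part D 0 i

section Diagram

variable {D : Finset Node}

theorem mem_iff_le_part (hD : IsDiagram D) {a b : ℕ} {c : Fin 2} :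
    (a, b, c) ∈ D ↔ 1 ≤ a ∧ 1 ≤ b ∧ b ≤ part D c a := by
  obtain ⟨hpos, hleft, -⟩ := hD
  constructor
  · intro hm
    obtain ⟨ha, hb⟩ := hpos _ hm
    refine ⟨ha, hb, ?_⟩
    have hrow : (Finset.Icc 1 b).card ≤ part D c a := by
      apply Finset.card_le_card_of_injOn (fun b' => (a, b', c))
      · intro b' hb'
        rw [Finset.mem_coe, Finset.mem_Icc] at hb'
        exact Finset.mem_filter.mpr ⟨hleft _ hm b' hb'.1 hb'.2, rfl, rfl⟩
      · intro x _ y _ hxy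
        simpa using congrArg (fun z : Node => z.2.1) hxy
    simpa using hrow
  · rintro ⟨ha, hb, hbp⟩
    obtain ⟨x, hx, hbx⟩ : ∃ x ∈ D.filter (fun γ => nrow γ = a ∧ ncomp γ = c), b ≤ ncol x := by
      by_contra! hno
      have hrow : part D c a ≤ (Finset.Icc 1 (b - 1)).card := by
        apply Finset.card_le_card_of_injOn ncol
        · intro x hx
          have := (hpos x (Finset.mem_filter.mp hx).1).2
          have := hno x hx
          simp only [Finset.coe_Icc, Set.mem_Icc]
          omega
        · intro x hx y hy hxy
          obtain ⟨-, hxa, hxc⟩ := Finset.mem_filter.mp hx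
          obtain ⟨-, hya, hyc⟩ := Finset.mem_filter.mp hy
          exact Prod.ext (hxa.trans hya.symm) (Prod.ext hxy (hxc.trans hyc.symm))
      rw [Nat.card_Icc] at hrow
      omega
    obtain ⟨hxD, hxa, hxc⟩ := Finset.mem_filter.mp hx
    simpa [hxa, hxc] using hleft x hxD b hb hbx

theorem part_succ_le (hD : IsDiagram D) {a : ℕ} (ha : 1 ≤ a) (c : Fin 2) :
    part D c (a + 1) ≤ part D c a := by
  rcases Nat.eq_zero_or_pos (part D c (a + 1)) with h | h
  · omega
  · have hm : (a + 1, part D c (a + 1), c) ∈ D := (mem_iff_le_part hD).mpr ⟨by omega, h, le_rfl⟩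
    have hup := hD.2.2 _ hm (by simp only [nrow]; omega)
    simp only [nrow, ncol, ncomp, Nat.add_sub_cancel] at hup
    exact ((mem_iff_le_part hD).mp hup).2.2

theorem part_erase_le (γ : Node) (c : Fin 2) (a : ℕ) : part (D.erase γ) c a ≤ part D c a :=
  Finset.card_le_card (Finset.filter_subset_filter _ (Finset.erase_subset _ _))

theorem part_erase_of_not_row {γ : Node} {a : ℕ} {c : Fin 2}
    (h : ¬(nrow γ = a ∧ ncomp γ = c)) : part (D.erase γ) c a = part D c a := by
  unfold part
  rw [Finset.filter_erase, Finset.erase_eq_of_notMem]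
  simpa only [Finset.mem_filter, not_and] using fun _ => h

theorem part_erase_add_one {γ : Node} (hγ : γ ∈ D) :
    part (D.erase γ) (ncomp γ) (nrow γ) + 1 = part D (ncomp γ) (nrow γ) := by
  unfold part
  rw [Finset.filter_erase]
  exact Finset.card_erase_add_one (Finset.mem_filter.mpr ⟨hγ, rfl, rfl⟩)

theorem Removable.ncol_eq_part (hD : IsDiagram D) {a b : ℕ} {c : Fin 2}
    (hrem : Removable D (a, b, c)) : b = part D c a := by
  obtain ⟨hmem, hD'⟩ := hrem
  obtain ⟨ha, hb, hbp⟩ := (mem_iff_le_part hD).mp hmem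
  by_contra hne
  have hright : (a, b + 1, c) ∈ D.erase (a, b, c) :=
    Finset.mem_erase.mpr ⟨by simp, (mem_iff_le_part hD).mpr ⟨ha, by omega, by omega⟩⟩
  have hleft := hD'.2.1 _ hright b hb (by simp only [ncol]; omega)
  exact (Finset.mem_erase.mp hleft).1 rfl

theorem addable_part_add_one (hD : IsDiagram D) {a : ℕ} (ha : 1 ≤ a) (c : Fin 2)
    (hlt : 2 ≤ a → part D c a < part D c (a - 1)) :
    Addable D (a, part D c a + 1, c) := by
  have hmem : ∀ {b}, 1 ≤ b → b ≤ part D c a + 1 → (a, b, c) ∈ insert (a, part D c a + 1, c) D := by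
    intro b hb hb'
    rcases hb'.lt_or_eq with hb' | rfl
    · exact Finset.mem_insert_of_mem ((mem_iff_le_part hD).mpr ⟨ha, hb, by omega⟩)
    · exact Finset.mem_insert_self _ _
  refine ⟨fun h => by simpa using ((mem_iff_le_part hD).mp h).2.2, ?_, ?_, ?_⟩
  · intro x hx
    rcases Finset.mem_insert.mp hx with rfl | h
    · exact ⟨ha, by simp [ncol]⟩
    · exact hD.1 x h
  · intro x hx b hb hbx
    rcases Finset.mem_insert.mp hx with rfl | h
    · exact hmem hb hbx
    · exact Finset.mem_insert_of_mem (hD.2.1 x h b hb hbx)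
  · intro x hx h2
    rcases Finset.mem_insert.mp hx with rfl | h
    · exact Finset.mem_insert_of_mem
        ((mem_iff_le_part hD).mpr ⟨by simp only [nrow] at h2 ⊢; omega, by simp [ncol], hlt h2⟩)
    · exact Finset.mem_insert_of_mem (hD.2.2 x h h2)

end Diagram

theorem NormalNode.not_addable_of_cover {α : Type*} {D : Finset Node}
    {lt : Node → Node → Prop} {r : Node → α} {i : α} {γ η : Node}
    (hγ : NormalNode D lt r i γ) (hr : r η = i) (hlt : lt γ η)
    (hcover : ∀ x, lt γ x → ¬lt x η) : ¬Addable D η := by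
  intro hη
  have hinterval : ∀ x, lt γ x → (lt x η ∨ x = η) → x = η := fun x hx hxη =>
    hxη.resolve_left (hcover x hx)
  have hA : {x | Addable D x ∧ r x = i ∧ lt γ x ∧ (lt x η ∨ x = η)} = {η} :=
    Set.eq_singleton_iff_unique_mem.mpr
      ⟨⟨hη, hr, hlt, Or.inr rfl⟩, fun x hx => hinterval x hx.2.2.1 hx.2.2.2⟩
  have hR : {x | Removable D x ∧ r x = i ∧ lt γ x ∧ (lt x η ∨ x = η)} = ∅ := by
    refine Set.eq_empty_of_forall_notMem fun x ⟨hx, _, hγx, hxη⟩ => ?_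
    obtain rfl := hinterval x hγx hxη
    exact hη.1 hx.1
  simpa [hA, hR] using hγ.2.2 η hr hlt

section ChargeOrder

variable {s : Fin 2 → ℤ} {γ η : Node}

theorem chargeLT_of_cont_eq (h : cont s γ = cont s η) (hγ : ncomp γ = 1) (hη : ncomp η = 0) :
    chargeLT s γ η :=
  Or.inr ⟨h, by rw [hγ, hη]; decide⟩

theorem not_chargeLT_of_cont_eq (h : cont s γ = cont s η) (hγ : ncomp γ = 1)
    (hη : ncomp η = 0) (x : Node) (hγx : chargeLT s γ x) : ¬chargeLT s x η := by
  unfold chargeLT at *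
  rw [hγ, hη] at *
  rintro (hxη | ⟨hxη, hx0⟩) <;> rcases hγx with hγx | ⟨hγx, hx1⟩
  all_goals omega

end ChargeOrder

section Dominance

variable {d : ℕ} {D : Finset Node} {γ : Node} {j : ℕ}

theorem ShiftDominated.eq_of_erase_of_lt (hdom : ShiftDominated d (D.erase γ)) (hD : IsDiagram D)
    (hγ : Removable D γ) (hj : 1 ≤ j) (hlt : part D 0 j < part D 1 (j + d)) :
    γ = (j + d, part D 0 j + 1, 1) ∧ part D 1 (j + d) = part D 0 j + 1 := by
  obtain ⟨a, b, c⟩ := γ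
  have hprev := hdom j hj
  have h0 := part_erase_le (D := D) (a, b, c) 0 j
  obtain ⟨rfl, rfl⟩ : a = j + d ∧ c = 1 := by
    by_contra hrow
    have := part_erase_of_not_row (D := D) (γ := (a, b, c)) (a := j + d) (c := 1) hrow
    omega
  have h1 : part (D.erase _) 1 (j + d) + 1 = part D 1 (j + d) := part_erase_add_one hγ.1
  have hb := hγ.ncol_eq_part hD
  refine ⟨by rw [hb]; congr 2; omega, by omega⟩

theorem ShiftDominated.addable_of_erase (hdom : ShiftDominated d (D.erase γ)) (hD : IsDiagram D)
    (hγ : nrow γ = j + d) (hj : 1 ≤ j) (heq : part D 1 (j + d) = part D 0 j + 1) :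
    Addable D (j, part D 0 j + 1, 0) := by
  refine addable_part_add_one hD hj 0 fun hj2 => ?_
  have hrow : ¬(nrow γ = j - 1 + d ∧ ncomp γ = 1) := fun h => by omega
  calc part D 0 j < part D 1 (j + d) := by omega
    _ ≤ part D 1 (j - 1 + d) := by
        have := part_succ_le hD (a := j - 1 + d) (by omega) 1
        rwa [show j - 1 + d + 1 = j + d by omega] at this
    _ = part (D.erase γ) 1 (j - 1 + d) := (part_erase_of_not_row hrow).symm
    _ ≤ part (D.erase γ) 0 (j - 1) := hdom (j - 1) (by omega)
    _ ≤ part D 0 (j - 1) := part_erase_le γ 0 (j - 1)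

theorem ShiftDominated.of_erase_normalNode (hdom : ShiftDominated d (D.erase γ)) {e : ℕ}
    {s : Fin 2 → ℤ} (hs : s 1 = s 0 + d) {i : ZMod e} (hD : IsDiagram D)
    (hγ : NormalNode D (chargeLT s) (res e s) i γ) : ShiftDominated d D := by
  intro j hj
  by_contra! hlt
  obtain ⟨rfl, heq⟩ := hdom.eq_of_erase_of_lt hD hγ.1 hj hlt
  have hcont : cont s (j + d, part D 0 j + 1, 1) = cont s (j, part D 0 j + 1, 0) := by
    simp only [cont, nrow, ncol, ncomp, hs]
    push_cast
    ring
  have hres : res e s (j, part D 0 j + 1, 0) = i := by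
    rw [← hγ.2.1, res, res, hcont]
  exact hγ.not_addable_of_cover hres (chargeLT_of_cont_eq hcont rfl rfl)
    (not_chargeLT_of_cont_eq hcont rfl rfl) (hdom.addable_of_erase hD rfl hj heq)

theorem UglovSet.shiftDominated {e : ℕ} {s : Fin 2 → ℤ} (hs : s 1 = s 0 + d) {n : ℕ}
    (h : UglovSet e s n D) : ShiftDominated d D := by
  unfold UglovSet at h
  induction h with
  | empty => intro i _; simp [part]
  | step _ hD hγ _ ih => exact ih.of_erase_normalNode hs hD hγ.1

end Dominance

theorem uglovSet_dominance_general (e : ℕ) (s₀ s₁ : ℕ) (hs : s₀ ≤ s₁) (n : ℕ)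
    (D : Finset Node) (h : UglovSet e ![(s₀ : ℤ), (s₁ : ℤ)] n D) :
    ∀ i : ℕ, 1 ≤ i → part D 1 (i + (s₁ - s₀)) ≤ part D 0 i :=
  h.shiftDominated (by simp [Nat.cast_sub hs])

/-- every `λ ∈ Φ_{e,n}^{(s₀,s₁)}` with `s₀ ≤ s₁` satisfies
`λ⁽⁰⁾_i ≥ λ⁽¹⁾_{i+s₁-s₀}` for all `i ≥ 1`. -/
theorem uglovSet_dominance (e : ℕ) (he : 1 < e) (s₀ s₁ : ℕ) (hs : s₀ ≤ s₁) (n : ℕ)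
    (D : Finset Node) (h : UglovSet e ![(s₀ : ℤ), (s₁ : ℤ)] n D) :
    ∀ i : ℕ, 1 ≤ i → part D 1 (i + (s₁ - s₀)) ≤ part D 0 i :=
  uglovSet_dominance_general e s₀ s₁ hs n D h

end UglovPaper
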